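/- Let U ⊆ ℝ² be a nonempty open set, Γ a smooth symmetric Christoffel map on U with symmetric Ricci tensor R_{ab}, and let γ : I → U be an affinely parameterised geodesic (γ''(t) + Γ(γ(t)) (γ'(t)) (γ'(t)) = 0) with nowhere-vanishing velocity. For smooth functions f, ρ : I → ℝ, the section t ↦ (f(t) γ'(t), ρ(t)) of the bundle ℝ² × ℝ along γ is parallel for the pullback along γ of the connection D_a(X, σ) = (∇_aX^b − δ_a{}^bσ, ∂_aσ + R_{ab}X^b) — i.e. (f γ')' + f Γ(γ)(γ')(γ') − ρ γ' = 0 and ρ' + f R(γ)(γ', γ') = 0 on I — if and only if ρ = f' and f'' + (R_{ab}(γ(t)) γ'^a(t) γ'^b(t)) f = 0 on I. -/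

import Mathlib

noncomputable section

/-- The plane ℝ², as `Fin 2 → ℝ`. -/
abbrev E2 : Type := Fin 2 → ℝ

/-- The standard basis vectors of ℝ². -/
def bas (a : Fin 2) : E2 := Pi.single a 1

/-- Partial derivative ∂ₐ of a scalar function on ℝ². -/
def pd (a : Fin 2) (f : E2 → ℝ) (x : E2) : ℝ := fderiv ℝ f x (bas a)

/-- Components Γ_{ab}{}^c of a Christoffel map Γ : ℝ² → (ℝ² →ₗ ℝ² →ₗ ℝ²). -/
def chr (Γ : E2 → (E2 →ₗ[ℝ] E2 →ₗ[ℝ] E2)) (a b c : Fin 2) (x : E2) : ℝ :=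
  Γ x (bas a) (bas b) c

/-- Ricci tensor components built from Christoffel components `Γc a b c` (= Γ_{ab}{}^c):
`R_{ad} = ∂_cΓ_{ad}{}^c − ∂_aΓ_{cd}{}^c + Γ_{cb}{}^cΓ_{ad}{}^b − Γ_{ab}{}^cΓ_{cd}{}^b`. -/
def ricciC (Γc : Fin 2 → Fin 2 → Fin 2 → E2 → ℝ) (a d : Fin 2) (x : E2) : ℝ :=
  (∑ c, pd c (Γc a d c) x) - (∑ c, pd a (Γc c d c) x)
  + (∑ b, ∑ c, Γc c b c x * Γc a d b x)
  - (∑ b, ∑ c, Γc a b c x * Γc c d b x)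

/-- Covariant derivative of the Ricci tensor:
`∇_aR_{bc} = ∂_aR_{bc} − Γ_{ab}{}^dR_{dc} − Γ_{ac}{}^dR_{bd}`. -/
def covRicciC (Γc : Fin 2 → Fin 2 → Fin 2 → E2 → ℝ) (a b c : Fin 2) (x : E2) : ℝ :=
  pd a (ricciC Γc b c) x - (∑ d, Γc a b d x * ricciC Γc d c x)
    - (∑ d, Γc a c d x * ricciC Γc b d x)

/-- `Y_{abc} = ∇_aR_{bc} − ∇_bR_{ac}`. -/
def YC (Γc : Fin 2 → Fin 2 → Fin 2 → E2 → ℝ) (a b c : Fin 2) (x : E2) : ℝ :=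
  covRicciC Γc a b c x - covRicciC Γc b a c x

/-- along an affinely parameterised geodesic `γ`, a section `(f γ', ρ)` of the
trivial rank-3 bundle is parallel for the pullback of the connection
`D_a(X,σ) = (∇_aX^b − δ_a{}^bσ, ∂_aσ + R_{ab}X^b)` iff `ρ = f′` and
`f″ + (R_{ab}γ′^aγ′^b) f = 0`. -/
theorem stmt_17 (U : Set E2) (hUo : IsOpen U) (hUne : U.Nonempty)
    (Γ : E2 → (E2 →ₗ[ℝ] E2 →ₗ[ℝ] E2))
    (hΓs : ∀ a b c : Fin 2, ContDiffOn ℝ (⊤ : ℕ∞) (chr Γ a b c) U)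
    (hsym : ∀ x ∈ U, ∀ u v : E2, Γ x u v = Γ x v u)
    (hRsym : ∀ x ∈ U, ∀ a b : Fin 2, ricciC (chr Γ) a b x = ricciC (chr Γ) b a x)
    (p q : ℝ) (γ : ℝ → E2) (hγ : ContDiffOn ℝ (⊤ : ℕ∞) γ (Set.Ioo p q))
    (hγU : ∀ t ∈ Set.Ioo p q, γ t ∈ U)
    (hreg : ∀ t ∈ Set.Ioo p q, deriv γ t ≠ 0)
    (hgeo : ∀ t ∈ Set.Ioo p q,
      deriv (deriv γ) t + Γ (γ t) (deriv γ t) (deriv γ t) = 0)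
    (f ρ : ℝ → ℝ)
    (hf : ContDiffOn ℝ (⊤ : ℕ∞) f (Set.Ioo p q)) (hρ : ContDiffOn ℝ (⊤ : ℕ∞) ρ (Set.Ioo p q)) :
    ((∀ t ∈ Set.Ioo p q,
        deriv (fun τ => f τ • deriv γ τ) t
          + f t • (Γ (γ t) (deriv γ t) (deriv γ t)) - ρ t • deriv γ t = 0) ∧
     (∀ t ∈ Set.Ioo p q,
        deriv ρ t
          + f t * (∑ a, ∑ b, ricciC (chr Γ) a b (γ t) * deriv γ t a * deriv γ t b) = 0))
    ↔ ((∀ t ∈ Set.Ioo p q, ρ t = deriv f t) ∧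
       (∀ t ∈ Set.Ioo p q,
          deriv (deriv f) t
            + (∑ a, ∑ b, ricciC (chr Γ) a b (γ t) * deriv γ t a * deriv γ t b) * f t
            = 0)) := by

  have hIo : IsOpen (Set.Ioo p q) := isOpen_Ioo
  have hγ' : ContDiffOn ℝ (⊤ : ℕ∞) (deriv γ) (Set.Ioo p q) :=
    hγ.deriv_of_isOpen hIo (by simp)
  have hfd : ∀ t ∈ Set.Ioo p q, DifferentiableAt ℝ f t := fun t ht =>
    (hf.differentiableOn (by simp)).differentiableAt (hIo.mem_nhds ht)
  have hγ'd : ∀ t ∈ Set.Ioo p q, DifferentiableAt ℝ (deriv γ) t := fun t ht =>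
    (hγ'.differentiableOn (by simp)).differentiableAt (hIo.mem_nhds ht)
  have hkey : ∀ t ∈ Set.Ioo p q,
      deriv (fun τ => f τ • deriv γ τ) t
        + f t • (Γ (γ t) (deriv γ t) (deriv γ t)) - ρ t • deriv γ t
      = (deriv f t - ρ t) • deriv γ t := by
    intro t ht
    rw [deriv_fun_smul (hfd t ht) (hγ'd t ht)]
    have h1 : deriv (deriv γ) t = - Γ (γ t) (deriv γ t) (deriv γ t) :=
      eq_neg_of_add_eq_zero_left (hgeo t ht)
    rw [h1, smul_neg, sub_smul]
    abel
  constructor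
  · rintro ⟨h1, h2⟩
    have hρf : ∀ t ∈ Set.Ioo p q, ρ t = deriv f t := by
      intro t ht
      have := h1 t ht
      rw [hkey t ht] at this
      rcases smul_eq_zero.1 this with h | h
      · linarith [sub_eq_zero.1 (by linarith [h] : deriv f t - ρ t = 0)]
      · exact absurd h (hreg t ht)
    refine ⟨hρf, fun t ht => ?_⟩
    have hev : ρ =ᶠ[nhds t] deriv f :=
      Filter.eventuallyEq_of_mem (hIo.mem_nhds ht) hρf
    have := h2 t ht
    rw [hev.deriv_eq] at this
    linarith [this]
  · rintro ⟨hρf, h2⟩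
    constructor
    · intro t ht
      rw [hkey t ht, hρf t ht, sub_self, zero_smul]
    · intro t ht
      have hev : ρ =ᶠ[nhds t] deriv f :=
        Filter.eventuallyEq_of_mem (hIo.mem_nhds ht) hρf
      rw [hev.deriv_eq]
      linarith [h2 t ht]
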